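/- arXiv:1708.03010 — 4 statements merged into one kernel-verified Lean document; each statement's English description precedes it below -/
import Mathlib

section
/- Let K be a field of characteristic zero, let R = K[x_1, …, x_d] be a polynomial ring, and let 𝔪 = (x_1, …, x_d). If 𝔭 ⊆ R is a prime ideal with 𝔭 ⊆ 𝔪^t for some positive integer t, then 𝔭^{(n)} ⊆ 𝔪^{n+t-1} for every positive integer n. -/
/-- The `n`-th symbolic power of a prime ideal `P`:
`P^{(n)} = P^n R_P ∩ R`, the preimage in `R` of `P^n R_P` under the localization map. -/
noncomputable def symbolicPower {R : Type*} [CommRing R] (P : Ideal R) [P.IsPrime] (n : ℕ) :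
    Ideal R :=
  (Ideal.map (algebraMap R (Localization.AtPrime P)) (P ^ n)).comap
    (algebraMap R (Localization.AtPrime P))

/-! Every partial derivative lowers the symbolic power of `𝔭` by at most one, and in
characteristic zero a polynomial without constant term whose partial derivatives all lie in
`𝔪ᵏ` lies in `𝔪ᵏ⁺¹`. Starting from `𝔭⁽¹⁾ = 𝔭 ⊆ 𝔪ᵗ`, induction on `n` gives `𝔭⁽ⁿ⁾ ⊆ 𝔪ⁿ⁺ᵗ⁻¹`. -/

open MvPolynomial

theorem mem_symbolicPower_iff {R : Type*} [CommRing R] {P : Ideal R} [P.IsPrime] {n : ℕ}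
    {f : R} : f ∈ symbolicPower P n ↔ ∃ s ∉ P, s * f ∈ P ^ n :=
  IsLocalization.algebraMap_mem_map_algebraMap_iff P.primeCompl _ _ _

theorem symbolicPower_le_self {R : Type*} [CommRing R] (P : Ideal R) [P.IsPrime] {n : ℕ}
    (hn : n ≠ 0) : symbolicPower P n ≤ P := by
  intro f hf
  obtain ⟨s, hs, hsf⟩ := mem_symbolicPower_iff.mp hf
  exact (‹P.IsPrime›.mem_or_mem (Ideal.pow_le_self hn hsf)).resolve_left hs

namespace Derivation

theorem map_mem_pow {A R : Type*} [CommSemiring A] [CommSemiring R] [Algebra A R]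
    (D : Derivation A R R) {I : Ideal R} : ∀ {n : ℕ} {x : R}, x ∈ I ^ (n + 1) → D x ∈ I ^ n
  | 0, _, _ => by simp
  | n + 1, x, hx => by
    rw [pow_succ] at hx
    refine Submodule.mul_induction_on hx (fun a ha b hb => ?_) (fun x y hx hy => ?_)
    · rw [leibniz, smul_eq_mul, smul_eq_mul]
      exact add_mem (Ideal.mul_mem_right _ _ ha)
        (pow_succ' I n ▸ Ideal.mul_mem_mul hb (D.map_mem_pow ha))
    · rw [map_add]
      exact add_mem hx hy

theorem map_mem_symbolicPower {A R : Type*} [CommSemiring A] [CommRing R] [Algebra A R]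
    (D : Derivation A R R) {P : Ideal R} [P.IsPrime] {n : ℕ} {f : R}
    (hf : f ∈ symbolicPower P (n + 1)) : D f ∈ symbolicPower P n := by
  obtain ⟨s, hs, hsf⟩ := mem_symbolicPower_iff.mp hf
  refine mem_symbolicPower_iff.mpr ⟨s * s, ‹P.IsPrime›.mul_notMem hs hs, ?_⟩
  have hleibniz : s * s * D f = s * D (s * f) - D s * (s * f) := by
    rw [leibniz, smul_eq_mul, smul_eq_mul]
    ring
  rw [hleibniz]
  exact sub_mem (Ideal.mul_mem_left _ _ (D.map_mem_pow hsf))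
    (Ideal.mul_mem_left _ _ (Ideal.pow_le_pow_right n.le_succ hsf))

end Derivation

theorem mem_pow_idealOfVars_succ_of_pderiv_mem {σ R : Type*} [CommSemiring R]
    [NoZeroDivisors R] [CharZero R] {k : ℕ} {f : MvPolynomial σ R} (hf : f ∈ idealOfVars σ R)
    (hpderiv : ∀ i, pderiv i f ∈ idealOfVars σ R ^ k) : f ∈ idealOfVars σ R ^ (k + 1) := by
  rw [mem_pow_idealOfVars_iff]
  intro x hx
  rw [idealOfVars, ← Set.image_univ, mem_ideal_span_X_image] at hf
  obtain ⟨i, -, hi⟩ := hf x hx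
  obtain ⟨y, rfl⟩ : ∃ y, x = y + Finsupp.single i 1 :=
    ⟨x - Finsupp.single i 1, (tsub_add_cancel_of_le (Finsupp.single_le_iff.mpr
      (Nat.one_le_iff_ne_zero.mpr hi))).symm⟩
  have hy : y ∈ (pderiv i f).support := by
    rw [mem_support_iff, coeff_pderiv]
    exact mul_ne_zero (mem_support_iff.mp hx) (Nat.cast_add_one_ne_zero _)
  simpa using (mem_pow_idealOfVars_iff k _).mp (hpderiv i) y hy

/-- If `K` is a field of characteristic zero, `R = K[x_1, …, x_d]`, `𝔪 = (x_1, …, x_d)`,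
and `𝔭 ⊆ 𝔪^t` is a prime ideal, then `𝔭^{(n)} ⊆ 𝔪^{n+t-1}` for every positive `n`. -/
theorem symbolicPower_le_pow_maximalIdeal_of_le_pow {K : Type*} [Field K] [CharZero K]
    (d : ℕ) (P : Ideal (MvPolynomial (Fin d) K)) [P.IsPrime]
    (t : ℕ) (ht : 0 < t)
    (hPt : P ≤ (Ideal.span (Set.range (MvPolynomial.X : Fin d → MvPolynomial (Fin d) K))) ^ t)
    (n : ℕ) (hn : 0 < n) :
    symbolicPower P n ≤
      (Ideal.span (Set.range (MvPolynomial.X : Fin d → MvPolynomial (Fin d) K))) ^ (n + t - 1) := by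
  have hPm : P ≤ idealOfVars (Fin d) K := hPt.trans (Ideal.pow_le_self ht.ne')
  induction n, hn using Nat.le_induction with
  | base => simpa using (symbolicPower_le_self P one_ne_zero).trans hPt
  | succ n _ ih =>
    intro f hf
    have hfm : f ∈ idealOfVars (Fin d) K := hPm (symbolicPower_le_self P n.succ_ne_zero hf)
    have hderiv (i : Fin d) := ih ((pderiv i).map_mem_symbolicPower hf)
    have hfmem := mem_pow_idealOfVars_succ_of_pderiv_mem hfm hderiv
    rwa [show n + t - 1 + 1 = n + 1 + t - 1 by omega] at hfmem
end

section
/- Let R be a Noetherian commutative ring and let I be an ideal of R. Then the set A(I) = ⋃_{n ≥ 1} Ass_R(R/I^n), the union over all n ≥ 1 of the sets of associated primes of R/I^n, is a finite set. -/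
/-!
Let `A = R[It]` be the Rees algebra of `I`. Its quotient `A ⧸ I A` is the associated graded ring
`⊕ Iⁿ/Iⁿ⁺¹`: a finitely generated module over the Noetherian ring `A`, hence with finitely many
associated primes over `R`, and each `Iⁿ/Iⁿ⁺¹` embeds `R`-linearly into it by `x ↦ x tⁿ`.
The exact sequences `0 → Iⁿ/Iⁿ⁺¹ → R/Iⁿ⁺¹ → R/Iⁿ → 0` then give `Ass(R/Iⁿ) ⊆ Ass_R(A ⧸ I A)`
by induction on `n`.
-/

open Polynomial

section

variable {R A : Type*} [CommRing R] [CommRing A] [Algebra R A]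

theorem associatedPrimes_quotient_subset_comap (P : Ideal A) [P.IsPrime] :
    associatedPrimes R (A ⧸ P) ⊆ {P.comap (algebraMap R A)} := by
  rintro q ⟨hq, x, rfl⟩
  have hx : x ≠ 0 := by
    rintro rfl
    exact hq.ne_top (by simp)
  have hcolon : (⊥ : Submodule R (A ⧸ P)).colon {x} = P.comap (algebraMap R A) := by
    ext r
    rw [Submodule.mem_colon_singleton, Submodule.mem_bot, Algebra.smul_def, mul_eq_zero,
      or_iff_left hx, Ideal.mem_comap, ← Ideal.Quotient.eq_zero_iff_mem,
      Ideal.Quotient.mk_algebraMap]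
  rw [Set.mem_singleton_iff, hcolon, (Ideal.IsPrime.comap _).radical]

theorem associatedPrimes.finite_of_isScalarTower [IsNoetherianRing A] (M : Type*) [AddCommGroup M]
    [Module A M] [Module R M] [IsScalarTower R A M] [Module.Finite A M] :
    (associatedPrimes R M).Finite := by
  -- The intermediate modules of a prime filtration are only `A`-modules.
  revert ‹Module R M› ‹IsScalarTower R A M›
  induction ‹Module.Finite A M› using
    IsNoetherianRing.induction_on_isQuotientEquivQuotientPrime A with
  | subsingleton N => intros; simp [associatedPrimes.eq_empty_of_subsingleton]
  | quotient N p e =>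
    intros
    rw [LinearEquiv.AssociatedPrimes.eq (e.restrictScalars R)]
    exact (Set.finite_singleton _).subset (associatedPrimes_quotient_subset_comap p.1)
  | exact N₁ N₂ N₃ f g hf _ hfg h₁ h₃ =>
    intros
    let := Module.compHom N₁ (algebraMap R A)
    let := Module.compHom N₃ (algebraMap R A)
    have : IsScalarTower R A N₁ := .of_algebraMap_smul fun _ _ ↦ rfl
    have : IsScalarTower R A N₃ := .of_algebraMap_smul fun _ _ ↦ rfl
    exact (h₁.union h₃).subset <| associatedPrimes.subset_union_of_exact
      (f := f.restrictScalars R) (g := g.restrictScalars R) hf hfg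

end

theorem associatedPrimes_quotient_subset_union {R M : Type*} [CommRing R] [AddCommGroup M]
    [Module R M] {N N' : Submodule R M} (h : N ≤ N') :
    associatedPrimes R (M ⧸ N) ⊆
      associatedPrimes R (N' ⧸ N.comap N'.subtype) ∪ associatedPrimes R (M ⧸ N') := by
  refine associatedPrimes.subset_union_of_exact
    (f := (N.comap N'.subtype).mapQ N N'.subtype le_rfl) (g := N.factor h) ?_ ?_
  · rw [← LinearMap.ker_eq_bot, Submodule.ker_mapQ, Submodule.mkQ_map_self]
  · rw [LinearMap.exact_iff, Submodule.factor, Submodule.ker_mapQ, Submodule.range_mapQ,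
      Submodule.range_subtype, Submodule.comap_id]

namespace reesAlgebra

variable {R : Type*} [CommRing R] (I : Ideal R)

noncomputable def monomialₗ (n : ℕ) : ↥(I ^ n) →ₗ[R] reesAlgebra I :=
  LinearMap.codRestrict (reesAlgebra I).toSubmodule (monomial n ∘ₗ (I ^ n).subtype)
    fun x ↦ monomial_mem.mpr x.2

variable {I}

@[simp]
theorem coe_monomialₗ {n : ℕ} (x : ↥(I ^ n)) : (monomialₗ I n x : R[X]) = monomial n (x : R) :=
  rfl

theorem coeff_mem_pow_succ_of_mem_map {f : reesAlgebra I}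
    (hf : f ∈ I.map (algebraMap R (reesAlgebra I))) (i : ℕ) :
    (f : R[X]).coeff i ∈ I ^ (i + 1) := by
  rw [← Submodule.restrictScalars_mem R, ← Ideal.smul_top_eq_map] at hf
  refine Submodule.smul_induction_on hf (fun a ha g _ ↦ ?_) fun f g hf hg ↦ add_mem hf hg
  exact pow_succ' I i ▸ Ideal.mul_mem_mul ha (g.2 i)

theorem monomialₗ_mem_map_of_mem_smul {n : ℕ} {x : R} (hx : x ∈ I • I ^ n) :
    monomialₗ I n ⟨x, Submodule.smul_le_right hx⟩ ∈ I.map (algebraMap R (reesAlgebra I)) := by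
  induction hx using Submodule.smul_induction_on' with
  | smul a ha y hy =>
    change monomialₗ I n (a • ⟨y, hy⟩) ∈ _
    rw [map_smul, Algebra.smul_def]
    exact Ideal.mul_mem_right _ _ (Ideal.mem_map_of_mem _ ha)
  | add x hx y hy hxI hyI =>
    change monomialₗ I n (⟨x, Submodule.smul_le_right hx⟩ + ⟨y, Submodule.smul_le_right hy⟩) ∈ _
    rw [map_add]
    exact add_mem hxI hyI

theorem ker_mkₐ_comp_monomialₗ (n : ℕ) :
    LinearMap.ker ((Ideal.Quotient.mkₐ R (I.map (algebraMap R (reesAlgebra I)))).toLinearMap ∘ₗ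
      monomialₗ I n) = Submodule.comap (I ^ n).subtype (I ^ (n + 1)) := by
  ext x
  simp only [LinearMap.mem_ker, LinearMap.comp_apply, AlgHom.toLinearMap_apply,
    Ideal.Quotient.mkₐ_eq_mk, Ideal.Quotient.eq_zero_iff_mem, Submodule.mem_comap]
  refine ⟨fun h ↦ ?_, fun h ↦ ?_⟩
  · simpa using coeff_mem_pow_succ_of_mem_map h n
  · rw [Submodule.subtype_apply, pow_succ', ← Ideal.smul_eq_mul] at h
    exact monomialₗ_mem_map_of_mem_smul h

variable (I)

theorem associatedPrimes_subquotient_pow_subset (n : ℕ) :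
    associatedPrimes R (↥(I ^ n) ⧸ Submodule.comap (I ^ n).subtype (I ^ (n + 1))) ⊆
      associatedPrimes R (reesAlgebra I ⧸ I.map (algebraMap R (reesAlgebra I))) :=
  associatedPrimes.subset_of_injective <| LinearMap.ker_eq_bot.mp <|
    Submodule.ker_liftQ_eq_bot' _ _ (ker_mkₐ_comp_monomialₗ n).symm

set_option synthInstance.maxHeartbeats 40000 in
theorem finite_associatedPrimes_quotient_map [IsNoetherianRing R] :
    (associatedPrimes R (reesAlgebra I ⧸ I.map (algebraMap R (reesAlgebra I)))).Finite :=
  associatedPrimes.finite_of_isScalarTower (A := reesAlgebra I) _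

theorem associatedPrimes_quotient_pow_subset (n : ℕ) :
    associatedPrimes R (R ⧸ I ^ n) ⊆
      associatedPrimes R (reesAlgebra I ⧸ I.map (algebraMap R (reesAlgebra I))) := by
  induction n with
  | zero => simp [associatedPrimes.eq_empty_of_subsingleton]
  | succ n ih =>
    exact (associatedPrimes_quotient_subset_union (Ideal.pow_le_pow_right n.le_succ)).trans
      (Set.union_subset (associatedPrimes_subquotient_pow_subset I n) ih)

end reesAlgebra

/-- **Brodmann's theorem**: for an ideal `I` of a Noetherian commutative ring `R`, the set
`A(I) = ⋃_{n ≥ 1} Ass_R(R/Iⁿ)` of associated primes of all the powers of `I` is finite. -/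
theorem finite_iUnion_associatedPrimes_quotient_pow {R : Type*} [CommRing R]
    [IsNoetherianRing R] (I : Ideal R) :
    (⋃ n : ℕ, ⋃ (_ : 1 ≤ n), associatedPrimes R (R ⧸ I ^ n)).Finite :=
  (reesAlgebra.finite_associatedPrimes_quotient_map I).subset
    (Set.iUnion₂_subset fun n _ ↦ reesAlgebra.associatedPrimes_quotient_pow_subset I n)
end

section
/- Let R ⊆ S be a finite extension of Noetherian integral domains with R integrally closed in its fraction field, and let e = [Frac(S) : Frac(R)] be the degree of the fraction field extension. Let 𝔮 be a prime ideal of R. Then: (a) for every x ∈ √(𝔮S) one has x^e ∈ 𝔮S; and (b) if e! is invertible in S, then (√(𝔮S))^e ⊆ 𝔮S. -/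
/-!
If `x ^ n ∈ 𝔮S`, then `x ^ (n + 1)` is integral over `𝔮`, so `x` is a root of a monic polynomial
over `R` whose non-leading coefficients lie in `𝔮`. Since `R` is integrally closed, the minimal
polynomial of `x` over `R` divides it, and reducing modulo the primes containing `𝔮` shows that its
non-leading coefficients lie in `√𝔮 = 𝔮`. Hence `x ^ d ∈ 𝔮S`, where `d` is the degree of that
minimal polynomial, which is also the degree of `x` over `K` and so at most `e`.

For (b), the polarization identity `∑_U (-1)^|U| (∑_{i ∉ U} x_i)^e = e! ∏ x_i` writes `e!` times a
product of `e` elements of `√(𝔮S)` as a combination of `e`-th powers of such elements.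
-/

open Finset Polynomial Nat

theorem Finset.sum_powerset_neg_one_pow_card' {ι A : Type*} [CommRing A] [DecidableEq ι]
    (s : Finset ι) : ∑ U ∈ s.powerset, (-1 : A) ^ #U = if s = ∅ then 1 else 0 := by
  exact_mod_cast congrArg (Int.cast : ℤ → A) (sum_powerset_neg_one_pow_card (x := s))

theorem Finset.sum_neg_one_pow_card_mul_sum_compl_pow {A : Type*} [CommRing A] (n : ℕ)
    (x : Fin n → A) : ∑ U : Finset (Fin n), (-1) ^ #U * (∑ i ∈ Uᶜ, x i) ^ n = n ! * ∏ i, x i := by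
  -- Expand the power as a sum over maps `g`; inclusion–exclusion in `U` keeps the surjective ones.
  calc ∑ U : Finset (Fin n), (-1) ^ #U * (∑ i ∈ Uᶜ, x i) ^ n
      = ∑ U : Finset (Fin n), ∑ g : Fin n → Fin n,
          if U ⊆ (univ.image g)ᶜ then (-1) ^ #U * ∏ j, x (g j) else 0 := by
        refine sum_congr rfl fun U _ => ?_
        rw [sum_pow', mul_sum, ← sum_filter]
        refine sum_congr ?_ fun _ _ => rfl
        ext g
        simp only [Fintype.mem_piFinset, mem_compl, mem_filter, mem_univ, true_and, subset_iff,
          mem_image]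
        grind
    _ = ∑ g : Fin n → Fin n, (∑ U ∈ (univ.image g)ᶜ.powerset, (-1) ^ #U) * ∏ j, x (g j) := by
        rw [sum_comm]
        refine sum_congr rfl fun g _ => ?_
        rw [← sum_filter, sum_mul]
        congr 1
        ext U
        simp
    _ = ∑ g : Fin n → Fin n, if Function.Surjective g then ∏ j, x (g j) else 0 := by
        refine sum_congr rfl fun g _ => ?_
        have : (univ.image g)ᶜ = ∅ ↔ Function.Surjective g := by
          simp [eq_univ_iff_forall, Function.Surjective]
        simp only [sum_powerset_neg_one_pow_card', this]
        split_ifs <;> simp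
    _ = ∑ σ : Equiv.Perm (Fin n), ∏ j, x (σ j) := by
        rw [← sum_filter]
        refine (sum_nbij (fun σ : Equiv.Perm (Fin n) => (σ : Fin n → Fin n))
          (fun σ _ => by simpa using σ.surjective)
          (fun σ _ τ _ h => Equiv.ext (congrFun h)) (fun g hg => ?_) fun _ _ => rfl).symm
        have hg : Function.Surjective g := by simpa using hg
        exact ⟨Equiv.ofBijective g ⟨Finite.injective_iff_surjective.2 hg, hg⟩, mem_univ _, rfl⟩
    _ = n ! * ∏ i, x i := by
        simp [Equiv.prod_comp, Fintype.card_perm]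

theorem Ideal.pow_le_of_forall_pow_mem {A : Type*} [CommRing A] {I J : Ideal A} {n : ℕ}
    (h : ∀ x ∈ I, x ^ n ∈ J) (hn : IsUnit (n ! : A)) : I ^ n ≤ J := by
  rw [Submodule.pow_eq_span_pow_set, Submodule.span_le]
  intro y hy
  obtain ⟨x, rfl⟩ := Set.mem_pow.1 hy
  rw [SetLike.mem_coe, List.prod_ofFn, ← J.unit_mul_mem_iff_mem hn,
    ← sum_neg_one_pow_card_mul_sum_compl_pow]
  exact J.sum_mem fun U _ => J.mul_mem_left _ (h _ (I.sum_mem fun i _ => (x i).2))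

section

variable {R S : Type*} [CommRing R] [CommRing S] [Algebra R S]

theorem Polynomial.Monic.pow_natDegree_mem_map {I : Ideal R} {p : R[X]} (hp : p.Monic) {x : S}
    (hx : aeval x p = 0) (hcoeff : ∀ i ≠ p.natDegree, p.coeff i ∈ I) :
    x ^ p.natDegree ∈ I.map (algebraMap R S) := by
  rw [hp.as_sum] at hx
  simp only [map_add, map_pow, aeval_X, map_sum, map_mul, aeval_C] at hx
  rw [eq_neg_of_add_eq_zero_left hx]
  exact neg_mem (sum_mem fun i hi => Ideal.mul_mem_right _ _
    (Ideal.mem_map_of_mem _ (hcoeff i (mem_range.1 hi).ne)))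

variable [IsDomain R] [IsIntegrallyClosed R] [IsDomain S]

theorem minpoly.coeff_mem_radical_of_mem_radical_map [Module.IsTorsionFree R S]
    [Algebra.IsIntegral R S] {I : Ideal R} {x : S} (hx : x ∈ (I.map (algebraMap R S)).radical)
    {i : ℕ} (hi : i ≠ (minpoly R x).natDegree) : (minpoly R x).coeff i ∈ I.radical := by
  obtain ⟨n, hn⟩ := hx
  obtain ⟨f, hf, hfx, hfI⟩ :=
    exists_monic_aeval_eq_zero_forall_mem_of_mem_map (Ideal.pow_mem_of_pow_mem _ hn n.le_succ)
  have hxR := Algebra.IsIntegral.isIntegral (R := R) x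
  have hdvd : minpoly R x ∣ expand R (n + 1) f :=
    minpoly.isIntegrallyClosed_dvd hxR (by rwa [expand_aeval])
  refine Ideal.radical_mono ?_
    (coeff_mem_radical_span_coeff_of_dvd _ _ (hf.expand n.succ_pos) (minpoly.monic hxR) hdvd i hi)
  rw [Ideal.span_le]
  rintro _ ⟨j, hj, rfl⟩
  rw [SetLike.mem_coe, coeff_expand n.succ_pos]
  split_ifs with hdiv
  · refine hfI _ fun h => hj.ne ?_
    rw [natDegree_expand, ← h, Nat.div_mul_cancel hdiv]
  · exact zero_mem I

theorem minpoly.natDegree_le_finrank (K L : Type*) [Field K] [CommRing L] [Nontrivial L]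
    [Algebra R K] [IsFractionRing R K] [Algebra S L] [Algebra K L] [Algebra R L]
    [IsScalarTower R S L] [IsScalarTower R K L] [Module.Finite K L] {x : S} (hx : IsIntegral R x) :
    (minpoly R x).natDegree ≤ Module.finrank K L := by
  rw [← (minpoly.monic hx).natDegree_map (algebraMap R K),
    ← minpoly.isIntegrallyClosed_eq_field_fractions K L hx]
  exact minpoly.natDegree_le _

end

theorem pow_degree_mem_of_mem_radical_map_general {R S : Type*} [CommRing R] [CommRing S]
    [IsDomain R] [IsDomain S]
    [Algebra R S] [Module.Finite R S] (hinj : Function.Injective (algebraMap R S))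
    [IsIntegrallyClosed R]
    (K L : Type*) [Field K] [Field L] [Algebra R K] [IsFractionRing R K]
    [Algebra S L] [IsFractionRing S L] [Algebra K L] [Algebra R L]
    [IsScalarTower R S L] [IsScalarTower R K L]
    (e : ℕ) (he : Module.finrank K L = e)
    (q : Ideal R) (hq : q.IsPrime) :
    (∀ x ∈ (q.map (algebraMap R S)).radical, x ^ e ∈ q.map (algebraMap R S)) ∧
      (IsUnit ((e.factorial : ℕ) : S) →
        ((q.map (algebraMap R S)).radical) ^ e ≤ q.map (algebraMap R S)) := by
  have : FaithfulSMul R S := (faithfulSMul_iff_algebraMap_injective R S).mpr hinj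
  -- `L` is the localization of `S` at `R ∖ {0}`, as `S` is integral over `R`.
  have : Module.Finite K L := .of_isLocalization R S (nonZeroDivisors R)
  have pow_mem (x) (hx : x ∈ (q.map (algebraMap R S)).radical) :
      x ^ e ∈ q.map (algebraMap R S) := by
    have hxR := Algebra.IsIntegral.isIntegral (R := R) x
    have hxd := (minpoly.monic hxR).pow_natDegree_mem_map (minpoly.aeval R x)
      fun i hi => hq.radical ▸ minpoly.coeff_mem_radical_of_mem_radical_map hx hi
    exact Ideal.pow_mem_of_pow_mem _ hxd (he ▸ minpoly.natDegree_le_finrank K L hxR)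
  exact ⟨pow_mem, Ideal.pow_le_of_forall_pow_mem pow_mem⟩

/-- Let `R ⊆ S` be a finite extension of Noetherian integral domains with `R` integrally
closed in its fraction field, and let `e = [Frac(S) : Frac(R)]`. If `𝔮` is a prime ideal
of `R`, then (a) `x^e ∈ 𝔮S` for every `x ∈ √(𝔮S)`, and (b) if `e!` is invertible in `S`,
then `(√(𝔮S))^e ⊆ 𝔮S`. -/
theorem pow_degree_mem_of_mem_radical_map {R S : Type*} [CommRing R] [CommRing S]
    [IsDomain R] [IsDomain S] [IsNoetherianRing R] [IsNoetherianRing S]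
    [Algebra R S] [Module.Finite R S] (hinj : Function.Injective (algebraMap R S))
    [IsIntegrallyClosed R]
    (K L : Type*) [Field K] [Field L] [Algebra R K] [IsFractionRing R K]
    [Algebra S L] [IsFractionRing S L] [Algebra K L] [Algebra R L]
    [IsScalarTower R S L] [IsScalarTower R K L]
    (e : ℕ) (he : Module.finrank K L = e)
    (q : Ideal R) (hq : q.IsPrime) :
    (∀ x ∈ (q.map (algebraMap R S)).radical, x ^ e ∈ q.map (algebraMap R S)) ∧
      (IsUnit ((e.factorial : ℕ) : S) →
        ((q.map (algebraMap R S)).radical) ^ e ≤ q.map (algebraMap R S)) :=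
  pow_degree_mem_of_mem_radical_map_general hinj K L e he q hq
end

section
/- Let G be a finite simple graph, let c(G) denote the minimal size of a vertex cover of G, and let m(G) denote the maximal size of a set of pairwise disjoint edges of G. If c(G) > m(G) = n−1, then G contains an odd cycle of length at most 2n−1. -/
/-! If `G` has no odd closed walk it is bipartite, and then König's theorem produces a matching as
large as the smallest vertex cover, which is impossible. Hence `G` has an odd closed walk, and a
shortest one is an odd cycle `c`. Every other edge of `c` gives a matching of size
`(c.length - 1) / 2`, which is at most `n - 1`, so `c.length ≤ 2 * n - 1`. -/

/-- A finset `C` of vertices is a vertex cover of `G` if every edge of `G` has at least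
one endpoint in `C`. -/
def IsVertexCover {V : Type*} (G : SimpleGraph V) (C : Finset V) : Prop :=
  ∀ u v : V, G.Adj u v → u ∈ C ∨ v ∈ C

/-- A finset `M` of edges of `G` is a matching (a set of pairwise disjoint edges) if no
two distinct edges of `M` share a vertex. -/
def IsMatchingSet {V : Type*} (G : SimpleGraph V) (M : Finset (Sym2 V)) : Prop :=
  (M : Set (Sym2 V)) ⊆ G.edgeSet ∧
    (M : Set (Sym2 V)).Pairwise fun e f => ∀ v : V, ¬(v ∈ e ∧ v ∈ f)

section

open Finset Function

variable {V : Type*} {G : SimpleGraph V}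

theorem exists_isMatchingSet_card_eq {κ : Type*} [Fintype κ] {a b : κ → V}
    (ha : Injective a) (hb : Injective b) (hab : ∀ i j, a i ≠ b j)
    (hadj : ∀ i, G.Adj (a i) (b i)) :
    ∃ M : Finset (Sym2 V), IsMatchingSet G M ∧ #M = Fintype.card κ := by
  classical
  have hinj : Injective fun i => s(a i, b i) := by
    intro i j hij
    rcases Sym2.eq_iff.mp hij with ⟨h, -⟩ | ⟨h, -⟩
    · exact ha h
    · exact absurd h (hab i j)
  refine ⟨univ.image fun i => s(a i, b i), ⟨?_, ?_⟩,
    by rw [card_image_of_injective _ hinj, card_univ]⟩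
  · rintro _ he
    obtain ⟨i, -, rfl⟩ := mem_image.mp he
    exact hadj i
  · rintro _ he _ he' hne v ⟨hv, hv'⟩
    obtain ⟨i, -, rfl⟩ := mem_image.mp he
    obtain ⟨j, -, rfl⟩ := mem_image.mp he'
    have hij : i ≠ j := fun h => hne (h ▸ rfl)
    rw [Sym2.mem_iff] at hv hv'
    rcases hv with rfl | rfl <;> rcases hv' with h | h
    · exact hij (ha h)
    · exact hab i j h
    · exact hab j i h.symm
    · exact hij (hb h)

theorem SimpleGraph.Walk.IsCycle.exists_isMatchingSet_card_eq {u : V} {c : G.Walk u u}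
    (hc : c.IsCycle) : ∃ M : Finset (Sym2 V), IsMatchingSet G M ∧ #M = (c.length - 1) / 2 := by
  have hinj := hc.getVert_injOn'
  simpa using _root_.exists_isMatchingSet_card_eq (κ := Fin ((c.length - 1) / 2))
    (a := fun i => c.getVert (2 * i)) (b := fun i => c.getVert (2 * i + 1))
    (fun i j h => Fin.ext (by have := hinj (by simp; omega) (by simp; omega) h; omega))
    (fun i j h => Fin.ext (by have := hinj (by simp; omega) (by simp; omega) h; omega))
    (fun i j h => by have := hinj (by simp; omega) (by simp; omega) h; omega)
    (fun i => c.adj_getVert_succ (by omega))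

theorem SimpleGraph.Walk.exists_eq_append_append_of_not_isPath :
    ∀ {a b : V} (p : G.Walk a b), ¬ p.IsPath →
      ∃ (u : V) (c : G.Walk a u) (q : G.Walk u u) (r : G.Walk u b),
        0 < q.length ∧ p = c.append (q.append r) := by
  classical
  intro a b p hp
  induction p with
  | nil => exact absurd IsPath.nil hp
  | @cons a x b hadj p ih =>
    by_cases ha : a ∈ p.support
    · exact ⟨a, nil, cons hadj (p.takeUntil a ha), p.dropUntil a ha, by simp,
        by simp [take_spec]⟩
    · obtain ⟨u, c, q, r, hq, rfl⟩ := ih fun h => hp ((cons_isPath_iff hadj p).mpr ⟨h, ha⟩)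
      exact ⟨u, cons hadj c, q, r, hq, rfl⟩

/-- Splitting off a closed subwalk `q` leaves a closed walk whose length has the other parity,
so one of the two shorter closed walks is odd. -/
theorem SimpleGraph.Walk.exists_isCycle_odd_length {v : V} (w : G.Walk v v)
    (hw : Odd w.length) : ∃ (u : V) (c : G.Walk u u), c.IsCycle ∧ Odd c.length := by
  induction h : w.length using Nat.strong_induction_on generalizing v w with
  | _ L ih =>
  cases w with
  | nil => simp at hw
  | cons hadj p =>
    by_cases hp : p.IsPath
    · refine ⟨_, _, isCycle_iff_isPath_tail_and_le_length.mpr ⟨by simpa using hp, ?_⟩, hw⟩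
      have hp0 : p.length ≠ 0 := fun h0 => hadj.ne (p.eq_of_length_eq_zero h0).symm
      obtain ⟨k, hk⟩ := hw
      simp only [length_cons] at hk ⊢
      omega
    · obtain ⟨u, c, q, r, hq, rfl⟩ := p.exists_eq_append_append_of_not_isPath hp
      have hlen : (cons hadj (c.append (q.append r))).length =
          (cons hadj (c.append r)).length + q.length := by
        simp only [length_cons, length_append]
        omega
      have hlt : 0 < (cons hadj (c.append r)).length := by simp
      rw [hlen, Nat.odd_add] at hw
      by_cases hq' : Odd q.length
      · exact ih q.length (by omega) q hq' rfl
      · exact ih _ (by omega) _ (hw.mpr (Nat.not_odd_iff_even.mp hq')) rfl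

theorem Finset.exists_injective_of_card_le_card_biUnion_add {ι α : Type*} [Fintype ι]
    [DecidableEq α] (t : ι → Finset α) (d : ℕ)
    (h : ∀ s : Finset ι, #s ≤ #(s.biUnion t) + d) :
    ∃ (s : Finset ι) (f : s → α),
      Fintype.card ι ≤ #s + d ∧ Injective f ∧ ∀ i, f i ∈ t i.1 := by
  classical
  -- Hall's theorem after adjoining `d` common dummy elements to every `t i`
  let t' : ι → Finset (α ⊕ Fin d) := fun i => (t i).disjSum univ
  have hall : ∀ s : Finset ι, #s ≤ #(s.biUnion t') := by
    intro s
    rcases s.eq_empty_or_nonempty with rfl | ⟨i, hi⟩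
    · simp
    · have hs : s.biUnion t' = (s.biUnion t).disjSum univ := by
        ext (a | j)
        · simp [t']
        · simpa [t'] using ⟨i, hi⟩
      rw [hs, card_disjSum, card_univ, Fintype.card_fin]
      exact h s
  obtain ⟨g, hg, hgt⟩ := (all_card_le_biUnion_card_iff_exists_injective t').mp hall
  have hleft (i : {i // i ∈ univ.filter fun i => (g i).isLeft}) : (g i).isLeft :=
    (mem_filter.mp i.2).2
  refine ⟨univ.filter fun i => (g i).isLeft, fun i => (g i).getLeft (hleft i), ?_, ?_, ?_⟩
  · have hright : #(univ.filter fun i => ¬(g i).isLeft) ≤ d := by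
      calc #(univ.filter fun i => ¬(g i).isLeft)
          ≤ #((univ : Finset (Fin d)).map Embedding.inr) := by
            refine card_le_card_of_injOn g (fun i hi => ?_) hg.injOn
            simp only [coe_filter, mem_univ, true_and, Set.mem_ofPred_eq, Bool.not_eq_true,
              Sum.isLeft_eq_false] at hi
            simpa using ⟨_, Sum.inr_getRight _ hi⟩
        _ = d := by simp
    have := card_filter_add_card_filter_not (s := univ) fun i => (g i).isLeft
    rw [card_univ] at this
    omega
  · intro i j hij
    apply Subtype.ext
    apply hg
    rw [← Sum.inl_getLeft (g i) (hleft i), ← Sum.inl_getLeft (g j) (hleft j)]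
    exact congrArg Sum.inl hij
  · intro i
    have := hgt i
    rwa [← Sum.inl_getLeft (g i) (hleft i), inl_mem_disjSum] at this

theorem isVertexCover_sdiff_union_biUnion_neighborFinset [DecidableEq V] [G.LocallyFinite]
    {X : Finset V} (hX : ∀ ⦃u v⦄, G.Adj u v → (u ∈ X ↔ v ∉ X)) (S : Finset V) :
    IsVertexCover G ((X \ S) ∪ S.biUnion fun v => G.neighborFinset v) := by
  intro u v huv
  simp only [mem_union, mem_sdiff, mem_biUnion, SimpleGraph.mem_neighborFinset]
  have := hX huv
  by_cases hu : u ∈ S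
  · exact Or.inr (Or.inr ⟨u, hu, huv⟩)
  by_cases hv : v ∈ S
  · exact Or.inl (Or.inr ⟨v, hv, huv.symm⟩)
  tauto

/-- König's theorem. Hall's condition with deficiency `#X - k` holds because a set `S ⊆ X` with
few neighbours would give the small vertex cover `(X \ S) ∪ N(S)`. -/
theorem exists_le_card_isMatchingSet_of_forall_le_card_isVertexCover [Fintype V]
    (X : Finset V) (hX : ∀ ⦃u v⦄, G.Adj u v → (u ∈ X ↔ v ∉ X)) (k : ℕ)
    (hcover : ∀ C : Finset V, IsVertexCover G C → k ≤ #C) :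
    ∃ M : Finset (Sym2 V), IsMatchingSet G M ∧ k ≤ #M := by
  classical
  have hkX : k ≤ #X := hcover X fun u v huv => by have := hX huv; tauto
  have hdeficiency (s : Finset X) :
      #s ≤ #(s.biUnion fun x => G.neighborFinset x) + (#X - k) := by
    set S := s.map (Embedding.subtype _)
    have hSX : S ⊆ X := fun x hx => by
      obtain ⟨y, -, rfl⟩ := mem_map.mp hx
      exact y.2
    have hN :
        (S.biUnion fun v => G.neighborFinset v) = s.biUnion fun x => G.neighborFinset x := by
      ext; simp [S]
    have hcov := hcover _ (isVertexCover_sdiff_union_biUnion_neighborFinset hX S)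
    have hunion := card_union_le (X \ S) (s.biUnion fun x => G.neighborFinset x)
    rw [hN] at hcov
    have hSs : #S = #s := card_map _
    have hSle := card_le_card hSX
    rw [card_sdiff_of_subset hSX] at hunion
    omega
  obtain ⟨s, f, hcard, hf, hft⟩ :=
    exists_injective_of_card_le_card_biUnion_add _ _ hdeficiency
  have hadj (i : s) : G.Adj i.1.1 (f i) := (G.mem_neighborFinset ..).mp (hft i)
  obtain ⟨M, hM, hMcard⟩ := exists_isMatchingSet_card_eq
    (Subtype.val_injective.comp Subtype.val_injective) hf
    (fun i j h => (hX (hadj j)).mp j.1.2 (h ▸ i.1.2)) hadj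
  refine ⟨M, hM, ?_⟩
  rw [hMcard, Fintype.card_coe]
  rw [Fintype.card_coe] at hcard
  omega

theorem SimpleGraph.Colorable.exists_finset_adj_mem_iff_notMem [Fintype V] (hG : G.Colorable 2) :
    ∃ X : Finset V, ∀ ⦃u v⦄, G.Adj u v → (u ∈ X ↔ v ∉ X) := by
  classical
  obtain ⟨C⟩ := hG
  refine ⟨univ.filter (C · = 0), fun u v huv => ?_⟩
  have := C.valid huv
  simp only [mem_filter, mem_univ, true_and]
  omega

end

theorem exists_small_odd_cycle_of_cover_gt_matching_general {V : Type*} [Fintype V]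
    (G : SimpleGraph V) (n : ℕ)
    (hmatch' : ∀ M : Finset (Sym2 V), IsMatchingSet G M → M.card ≤ n - 1)
    (hcover : ∀ C : Finset V, IsVertexCover G C → n - 1 < C.card) :
    ∃ (v : V) (w : G.Walk v v), w.IsCycle ∧ Odd w.length ∧ w.length ≤ 2 * n - 1 := by
  by_cases hbip : G.Colorable 2
  · obtain ⟨X, hX⟩ := hbip.exists_finset_adj_mem_iff_notMem
    obtain ⟨M, hM, hcard⟩ :=
      exists_le_card_isMatchingSet_of_forall_le_card_isVertexCover X hX (n - 1 + 1) hcover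
    exact absurd (hmatch' M hM) (by omega)
  · obtain ⟨v, w, hw⟩ : ∃ (v : V) (w : G.Walk v v), Odd w.length := by
      simpa [SimpleGraph.two_colorable_iff_forall_loop_even] using hbip
    obtain ⟨u, c, hc, hodd⟩ := w.exists_isCycle_odd_length hw
    obtain ⟨M, hM, hcard⟩ := hc.exists_isMatchingSet_card_eq
    refine ⟨u, c, hc, hodd, ?_⟩
    have := hmatch' M hM
    have := hc.three_le_length
    obtain ⟨k, hk⟩ := hodd
    omega

/-- Let `G` be a finite simple graph with minimal vertex cover size `c(G)` and maximal
matching size `m(G)`. If `c(G) > m(G) = n - 1`, then `G` contains an odd cycle of length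
at most `2n - 1`. -/
theorem exists_small_odd_cycle_of_cover_gt_matching {V : Type*} [Fintype V] [DecidableEq V]
    (G : SimpleGraph V) (n : ℕ) (hn : 1 ≤ n)
    (hmatch : ∃ M : Finset (Sym2 V), IsMatchingSet G M ∧ M.card = n - 1)
    (hmatch' : ∀ M : Finset (Sym2 V), IsMatchingSet G M → M.card ≤ n - 1)
    (hcover : ∀ C : Finset V, IsVertexCover G C → n - 1 < C.card) :
    ∃ (v : V) (w : G.Walk v v), w.IsCycle ∧ Odd w.length ∧ w.length ≤ 2 * n - 1 :=
  exists_small_odd_cycle_of_cover_gt_matching_general G n hmatch' hcover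
end
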